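/- arXiv:1601.01482 — 2 statements merged into one kernel-verified Lean document; each statement's English description precedes it below -/
import Mathlib

section
/- For every n ∈ ℕ, every k, h₁, …, hₙ ∈ ℒ, and every real polynomial p ∈ ℝ[x₁, …, xₙ], one has [a(k), p(a†(h₁), …, a†(hₙ))] = Σᵢ₌₁ⁿ (∂p/∂xᵢ)(a†(h₁), …, a†(hₙ))·⟨k, hᵢ⟩, where p(a†(h₁), …, a†(hₙ)) denotes the evaluation of p at the pairwise commuting elements a†(h₁), …, a†(hₙ). -/
open scoped RealInnerProductSpace

/-- Evaluation of a real multivariate polynomial at an n-tuple of (pairwise commuting)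
elements of a possibly noncommutative ℝ-algebra: monomials are evaluated as ordered
products b 0 ^ d 0 * b 1 ^ d 1 * ⋯ * b (n-1) ^ d (n-1). -/
noncomputable def mvEvalAlg {A : Type*} [Ring A] [Algebra ℝ A] {n : ℕ}
    (b : Fin n → A) (p : MvPolynomial (Fin n) ℝ) : A :=
  p.support.sum fun d =>
    algebraMap ℝ A (MvPolynomial.coeff d p) *
      ((List.finRange n).map fun i => b i ^ d i).prod

/-! Since the `a†(hᵢ)` commute, they generate a commutative subalgebra, so evaluation at them is an
algebra homomorphism `ℝ[x₁, …, xₙ] → A`. The inner derivation `[a(k), ·]` takes the value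
`⟪k, hᵢ⟫ • 1` on the generators, and such a derivation composed with an algebra homomorphism
from a polynomial ring is `∑ᵢ ⟪k, hᵢ⟫ ∂ᵢ`, as one checks on constants, sums and products `p * xⱼ`. -/

open MvPolynomial

theorem mvEvalAlg_comp_eq_aeval {R A : Type*} [CommRing R] [Algebra ℝ R] [Ring A] [Algebra ℝ A]
    {n : ℕ} (f : R →ₐ[ℝ] A) (x : Fin n → R) (p : MvPolynomial (Fin n) ℝ) :
    mvEvalAlg (fun i => f (x i)) p = f (aeval x p) := by
  simp only [mvEvalAlg, aeval_def, eval₂_eq', Fin.prod_univ_def, map_sum, map_mul,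
    AlgHom.commutes, map_list_prod, List.map_map, Function.comp_def, map_pow]

open scoped IsMulCommutative in
theorem exists_algHom_mvEvalAlg_eq {A : Type*} [Ring A] [Algebra ℝ A] {n : ℕ} (b : Fin n → A)
    (hb : ∀ i j, Commute (b i) (b j)) :
    ∃ ev : MvPolynomial (Fin n) ℝ →ₐ[ℝ] A, (∀ i, ev (X i) = b i) ∧ ∀ p, mvEvalAlg b p = ev p := by
  let S := Algebra.adjoin ℝ (Set.range b)
  have : IsMulCommutative S := Algebra.isMulCommutative_adjoin ℝ <| by
    rintro _ ⟨i, rfl⟩ _ ⟨j, rfl⟩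
    exact hb i j
  let x : Fin n → S := fun i => ⟨b i, Algebra.subset_adjoin ⟨i, rfl⟩⟩
  exact ⟨S.val.comp (aeval x), fun i => by simp [x],
    fun p => mvEvalAlg_comp_eq_aeval S.val x p⟩

theorem commutator_algHom_eq_sum_pderiv {R A σ : Type*} [CommRing R] [Ring A] [Algebra R A]
    [Fintype σ] (ev : MvPolynomial σ R →ₐ[R] A) (x : A) (c : σ → R)
    (hx : ∀ i, x * ev (X i) - ev (X i) * x = c i • (1 : A)) (p : MvPolynomial σ R) :
    x * ev p - ev p * x = ∑ i, c i • ev (pderiv i p) := by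
  classical
  induction p using MvPolynomial.induction_on with
  | C r => simp [Algebra.commutes]
  | add p q hp hq =>
    simp only [map_add, smul_add, Finset.sum_add_distrib, ← hp, ← hq]
    noncomm_ring
  | mul_X p j hp =>
    have hmul : x * (ev p * ev (X j)) - ev p * ev (X j) * x
        = (x * ev p - ev p * x) * ev (X j) + ev p * (x * ev (X j) - ev (X j) * x) := by
      noncomm_ring
    simp only [map_mul, pderiv_mul, pderiv_X, map_add, smul_add, Finset.sum_add_distrib, hmul,
      hp, hx, Finset.sum_mul, smul_mul_assoc]
    simp [Pi.single_apply]

theorem commutator_polynomial_creation_general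
    {L : Type*} [NormedAddCommGroup L] [InnerProductSpace ℝ L]
    {A : Type*} [Ring A] [Algebra ℝ A]
    (a adag : L →ₗ[ℝ] A)
    (hcomm' : ∀ k l : L, adag k * adag l - adag l * adag k = 0)
    (hccr : ∀ k l : L, a k * adag l - adag l * a k = ⟪k, l⟫ • (1 : A))
    (n : ℕ) (k : L) (h : Fin n → L) (p : MvPolynomial (Fin n) ℝ) :
    a k * mvEvalAlg (fun i => adag (h i)) p - mvEvalAlg (fun i => adag (h i)) p * a k
      = ∑ i : Fin n, ⟪k, h i⟫ • mvEvalAlg (fun j => adag (h j)) (MvPolynomial.pderiv i p) := by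
  have hb : ∀ i j, Commute (adag (h i)) (adag (h j)) := fun i j =>
    sub_eq_zero.mp (hcomm' (h i) (h j))
  obtain ⟨ev, hev_X, hev⟩ := exists_algHom_mvEvalAlg_eq _ hb
  simp only [hev]
  exact commutator_algHom_eq_sum_pderiv ev (a k) (fun i => ⟪k, h i⟫)
    (fun i => by rw [hev_X]; exact hccr k (h i)) p

/-- For every n, every k, h₁, …, hₙ ∈ ℒ and every p ∈ ℝ[x₁, …, xₙ],
[a(k), p(a†(h₁), …, a†(hₙ))] = Σᵢ (∂p/∂xᵢ)(a†(h₁), …, a†(hₙ))·⟨k, hᵢ⟩. -/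
theorem commutator_polynomial_creation
    {L : Type*} [NormedAddCommGroup L] [InnerProductSpace ℝ L]
    {A : Type*} [Ring A] [Algebra ℝ A]
    (a adag : L →ₗ[ℝ] A)
    (hcomm : ∀ k l : L, a k * a l - a l * a k = 0)
    (hcomm' : ∀ k l : L, adag k * adag l - adag l * adag k = 0)
    (hccr : ∀ k l : L, a k * adag l - adag l * a k = ⟪k, l⟫ • (1 : A))
    (n : ℕ) (k : L) (h : Fin n → L) (p : MvPolynomial (Fin n) ℝ) :
    a k * mvEvalAlg (fun i => adag (h i)) p - mvEvalAlg (fun i => adag (h i)) p * a k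
      = ∑ i : Fin n, ⟪k, h i⟫ • mvEvalAlg (fun j => adag (h j)) (MvPolynomial.pderiv i p) :=
  commutator_polynomial_creation_general a adag hcomm' hccr n k h p
end

section
/- Let h₁, …, hₙ ∈ ℒ be linearly independent and let p ∈ ℝ[x₁, …, xₙ]. Then p(Φ(h₁), …, Φ(hₙ)) = 0 ℙ-almost everywhere on Ω if and only if p(x₁, …, xₙ) = 0 for all (x₁, …, xₙ) ∈ ℝⁿ, i.e. p is the zero polynomial. -/
/-!
The random vector `(Φ(h₁), …, Φ(hₙ))` has characteristic function `t ↦ exp (-‖∑ tᵢ hᵢ‖² / 2)`,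
so its law is the centered Gaussian whose covariance is the Gram matrix of the `hᵢ`. Linear
independence makes the Gram matrix positive definite, so this law is the image of the standard
Gaussian under an invertible affine map and charges every nonempty open set. A continuous
function vanishing almost everywhere for such a measure vanishes everywhere.
-/

open MeasureTheory ProbabilityTheory Matrix
open scoped RealInnerProductSpace

instance isOpenPosMeasure_stdGaussian {E : Type*} [NormedAddCommGroup E]
    [InnerProductSpace ℝ E] [FiniteDimensional ℝ E] [MeasurableSpace E] [BorelSpace E] :
    (stdGaussian E).IsOpenPosMeasure := by
  have : (gaussianReal 0 1).IsOpenPosMeasure :=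
    (gaussianReal_absolutelyContinuous' 0 one_ne_zero).isOpenPosMeasure
  let b := stdOrthonormalBasis ℝ E
  rw [stdGaussian_eq_map_pi_orthonormalBasis b]
  exact Continuous.isOpenPosMeasure_map (by fun_prop) fun v => ⟨b.repr v, b.sum_repr v⟩

open scoped MatrixOrder in
lemma isOpenPosMeasure_multivariateGaussian {ι : Type*} [Fintype ι] [DecidableEq ι]
    (m : EuclideanSpace ℝ ι) {S : Matrix ι ι ℝ} (hS : S.PosDef) :
    (multivariateGaussian m S).IsOpenPosMeasure := by
  have hsqrt : IsUnit (CFC.sqrt S) := hS.isStrictlyPositive.isUnit_cfcSqrt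
  refine Continuous.isOpenPosMeasure_map (by fun_prop) fun v =>
    ⟨toEuclideanCLM (𝕜 := ℝ) (CFC.sqrt S)⁻¹ (v - m), ?_⟩
  rw [← mul_apply_eq_comp, ← map_mul, mul_nonsing_inv _ ((isUnit_iff_isUnit_det _).mp hsqrt),
    map_one, one_apply_eq_self, add_sub_cancel]

lemma ae_comp_eq_const_iff_of_isOpenPosMeasure_map {Ω E Y : Type*} [MeasurableSpace Ω]
    {P : Measure Ω} [TopologicalSpace E] [MeasurableSpace E] [OpensMeasurableSpace E]
    [TopologicalSpace Y] [T2Space Y] {X : Ω → E} (hX : AEMeasurable X P)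
    [(P.map X).IsOpenPosMeasure] {f : E → Y} (hf : Continuous f) (c : Y) :
    (∀ᵐ ω ∂P, f (X ω) = c) ↔ ∀ x, f x = c := by
  rw [← ae_map_iff hX (isClosed_eq hf continuous_const).measurableSet]
  exact (hf.ae_eq_iff_eq _ continuous_const).trans funext_iff

lemma map_eq_multivariateGaussian_gram {Ω : Type*} [MeasurableSpace Ω] {P : Measure Ω}
    [IsProbabilityMeasure P] {L : Type*} [NormedAddCommGroup L] [InnerProductSpace ℝ L]
    {Φ : L →ₗ[ℝ] (Ω → ℝ)} (hmeas : ∀ k : L, Measurable (Φ k))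
    (hchar : ∀ k : L, ∫ ω, Complex.exp (Complex.I * (Φ k ω : ℂ)) ∂P
        = (Real.exp (-‖k‖ ^ 2 / 2) : ℂ))
    {ι : Type*} [Fintype ι] [DecidableEq ι] (h : ι → L) :
    P.map (fun ω => WithLp.toLp 2 (fun i => Φ (h i) ω)) = multivariateGaussian 0 (gram ℝ h) := by
  have hX : Measurable fun ω => WithLp.toLp 2 (fun i => Φ (h i) ω) :=
    (PiLp.continuous_toLp 2 _).measurable.comp (measurable_pi_lambda _ fun i => hmeas (h i))
  refine Measure.ext_of_charFun (funext fun t => ?_)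
  have hinner (ω : Ω) : ⟪WithLp.toLp 2 (fun i => Φ (h i) ω), t⟫ = Φ (∑ i, t i • h i) ω := by
    simp [PiLp.inner_apply, map_sum]
  have hquad : t ⬝ᵥ gram ℝ h *ᵥ t = ‖∑ i, t i • h i‖ ^ 2 := by
    simpa using star_dotProduct_gram_mulVec (𝕜 := ℝ) h t t
  rw [charFun_multivariateGaussian (posSemidef_gram ℝ h), charFun_apply,
    integral_map hX.aemeasurable (by fun_prop), hquad]
  simp_rw [hinner, mul_comm _ Complex.I, hchar]
  simp [neg_div]

/-- If h₁, …, hₙ ∈ ℒ are linearly independent and p ∈ ℝ[x₁, …, xₙ],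
then p(Φ(h₁), …, Φ(hₙ)) = 0 ℙ-a.e. iff p vanishes identically on ℝⁿ. -/
theorem polynomialField_zero_iff
    {Ω : Type*} [MeasurableSpace Ω] (P : Measure Ω) [IsProbabilityMeasure P]
    {L : Type*} [NormedAddCommGroup L] [InnerProductSpace ℝ L]
    (Φ : L →ₗ[ℝ] (Ω → ℝ))
    (hmeas : ∀ k : L, Measurable (Φ k))
    (hchar : ∀ k : L, ∫ ω, Complex.exp (Complex.I * (Φ k ω : ℂ)) ∂P
        = (Real.exp (-‖k‖ ^ 2 / 2) : ℂ))
    {n : ℕ} (h : Fin n → L) (hind : LinearIndependent ℝ h)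
    (p : MvPolynomial (Fin n) ℝ) :
    (∀ᵐ ω ∂P, MvPolynomial.eval (fun i => Φ (h i) ω) p = 0) ↔
      (∀ x : Fin n → ℝ, MvPolynomial.eval x p = 0) := by
  have hX : Measurable fun ω => WithLp.toLp 2 (fun i => Φ (h i) ω) :=
    (PiLp.continuous_toLp 2 _).measurable.comp (measurable_pi_lambda _ fun i => hmeas (h i))
  have : (P.map fun ω => WithLp.toLp 2 (fun i => Φ (h i) ω)).IsOpenPosMeasure := by
    rw [map_eq_multivariateGaussian_gram hmeas hchar h]
    exact isOpenPosMeasure_multivariateGaussian 0 (posDef_gram_of_linearIndependent hind)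
  rw [ae_comp_eq_const_iff_of_isOpenPosMeasure_map hX.aemeasurable
    (f := fun v : EuclideanSpace ℝ (Fin n) => MvPolynomial.eval v.ofLp p)
    ((MvPolynomial.continuous_eval p).comp (PiLp.continuous_ofLp 2 _)) 0]
  exact ⟨fun H x => H (WithLp.toLp 2 x), fun H v => H v.ofLp⟩
end
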